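/- Let V be a valuation ring with maximal ideal m, let n ≥ 1, let A := V[x₁,…,xₙ], and let f ∈ A be a polynomial at least one of whose coefficients does not lie in m (i.e. f ∉ mA). Then the quotient A/(f) is a flat V-module (equivalently, A/(f) is torsion-free over V): whenever v ∈ V and a, b ∈ A satisfy v·a = b·f with v ≠ 0, one has a ∈ fA. -/

import Mathlib

/-!
Write `b = c • p` with `c` a coefficient of `b` dividing all the others (divisibility is total in
a valuation ring), so that `p` has a coefficient `1`. Reducing modulo `m`, the polynomial ring over
the residue field is a domain, hence `p * f ∉ mA` and some coefficient of `p * f` is a unit.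
Comparing that coefficient in `v • a = c • (p * f)` gives `v ∣ c`, and cancelling `v` puts `a` in
`(f)`. Over a valuation ring (a Bézout domain) torsion-free modules are flat.
-/

open MvPolynomial IsLocalRing

namespace MvPolynomial

variable {σ R : Type*} [CommRing R]

theorem isPrime_map_C_of_isPrime (P : Ideal R) [P.IsPrime] :
    (P.map (C : R →+* MvPolynomial σ R)).IsPrime := by
  rw [← Ideal.mk_ker (I := P), ← ker_map]
  exact RingHom.ker_isPrime _

theorem dvd_of_C_dvd_C_mul [IsLocalRing R] {p : MvPolynomial σ R}
    (hp : p ∉ (maximalIdeal R).map (C : R →+* MvPolynomial σ R)) {v c : R}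
    (h : C v ∣ C c * p) : v ∣ c := by
  obtain ⟨d, hd⟩ : ∃ d, p.coeff d ∉ maximalIdeal R := by
    simpa [mem_map_C_iff] using hp
  have hunit : IsUnit (p.coeff d) := by simpa using hd
  rw [C_dvd_iff_dvd_coeff] at h
  simpa [coeff_C_mul, hunit.dvd_mul_right] using h d

theorem exists_eq_C_mul_notMem_map_maximalIdeal [IsDomain R] [ValuationRing R]
    {b : MvPolynomial σ R} (hb : b ≠ 0) :
    ∃ c p, b = C c * p ∧ p ∉ (maximalIdeal R).map (C : R →+* MvPolynomial σ R) := by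
  classical
  obtain ⟨d₀, hd₀, hmax⟩ := b.support.exists_max_image (fun d ↦ Ideal.span {b.coeff d})
    (support_nonempty.mpr hb)
  have hc : b.coeff d₀ ≠ 0 := mem_support_iff.mp hd₀
  obtain ⟨p, hbp⟩ : C (b.coeff d₀) ∣ b := by
    rw [C_dvd_iff_dvd_coeff]
    intro d
    by_cases hd : d ∈ b.support
    · exact Ideal.span_singleton_le_span_singleton.mp (hmax d hd)
    · simp [notMem_support_iff.mp hd]
  refine ⟨_, p, hbp, fun hp ↦ ?_⟩
  have hp₀ : p.coeff d₀ = 1 := by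
    refine mul_left_cancel₀ hc ?_
    conv_rhs => rw [hbp]
    rw [coeff_C_mul, mul_one]
  simpa [hp₀] using mem_map_C_iff.mp hp d₀

end MvPolynomial

section ValuationRing

variable {σ V : Type*} [CommRing V] [IsDomain V] [ValuationRing V]

theorem mem_span_singleton_of_C_mul_eq_mul {f : MvPolynomial σ V}
    (hf : f ∉ (maximalIdeal V).map (C : V →+* MvPolynomial σ V))
    {v : V} (hv : v ≠ 0) {a b : MvPolynomial σ V} (hab : C v * a = b * f) :
    a ∈ Ideal.span {f} := by
  have hCv : (C v : MvPolynomial σ V) ≠ 0 := by simpa using hv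
  rcases eq_or_ne b 0 with rfl | hb
  · rw [zero_mul, mul_eq_zero, or_iff_right hCv] at hab
    simp [hab]
  obtain ⟨c, p, rfl, hp⟩ := exists_eq_C_mul_notMem_map_maximalIdeal hb
  have hpf : p * f ∉ (maximalIdeal V).map (C : V →+* MvPolynomial σ V) := fun h ↦
    ((isPrime_map_C_of_isPrime (maximalIdeal V)).mem_or_mem h).elim hp hf
  obtain ⟨w, rfl⟩ : v ∣ c := dvd_of_C_dvd_C_mul hpf ⟨a, by rw [hab, mul_assoc]⟩
  have ha : a = C w * p * f :=
    mul_left_cancel₀ hCv (by rw [hab, map_mul]; ring)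
  exact Ideal.mem_span_singleton'.mpr ⟨C w * p, ha.symm⟩

theorem isTorsionFree_quotient_span_singleton {f : MvPolynomial σ V}
    (hf : f ∉ (maximalIdeal V).map (C : V →+* MvPolynomial σ V)) :
    Module.IsTorsionFree V (MvPolynomial σ V ⧸ Ideal.span {f}) := by
  refine Module.isTorsionFree_iff_smul_eq_zero.mpr fun v x hx ↦ or_iff_not_imp_left.mpr fun hv ↦ ?_
  obtain ⟨a, rfl⟩ := Ideal.Quotient.mk_surjective x
  rw [← Ideal.Quotient.mk_eq_mk, ← Submodule.Quotient.mk_smul, Submodule.Quotient.mk_eq_zero,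
    smul_eq_C_mul, Ideal.mem_span_singleton'] at hx
  obtain ⟨b, hb⟩ := hx
  exact Ideal.Quotient.eq_zero_iff_mem.mpr (mem_span_singleton_of_C_mul_eq_mul hf hv hb.symm)

end ValuationRing

theorem quotient_by_nonspecial_polynomial_flat_general
    (V : Type*) [CommRing V] [IsDomain V] [ValuationRing V]
    (n : ℕ)
    (f : MvPolynomial (Fin n) V)
    (hf : f ∉ (IsLocalRing.maximalIdeal V).map
      (MvPolynomial.C : V →+* MvPolynomial (Fin n) V)) :
    Module.Flat V (MvPolynomial (Fin n) V ⧸ Ideal.span {f}) ∧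
      ∀ (v : V) (a b : MvPolynomial (Fin n) V), v ≠ 0 →
        MvPolynomial.C v * a = b * f → a ∈ Ideal.span {f} := by
  refine ⟨?_, fun v a b hv hab ↦ mem_span_singleton_of_C_mul_eq_mul hf hv hab⟩
  rw [Module.Flat.flat_iff_torsion_eq_bot_of_isBezout,
    ← Submodule.isTorsionFree_iff_torsion_eq_bot]
  exact isTorsionFree_quotient_span_singleton hf

/-- Let `V` be a valuation ring with maximal ideal `m`, `n ≥ 1`,
`A = V[x₁,…,xₙ]` and `f ∈ A` a polynomial not all of whose coefficients lie in `m`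
(i.e. `f ∉ mA`).  Then `A/(f)` is a flat `V`-module; equivalently it is torsion-free:
whenever `v·a = b·f` with `v ∈ V` nonzero, `a` lies in the ideal `(f)`. -/
theorem quotient_by_nonspecial_polynomial_flat
    (V : Type*) [CommRing V] [IsDomain V] [ValuationRing V]
    (n : ℕ) (hn : 1 ≤ n)
    (f : MvPolynomial (Fin n) V)
    (hf : f ∉ (IsLocalRing.maximalIdeal V).map
      (MvPolynomial.C : V →+* MvPolynomial (Fin n) V)) :
    Module.Flat V (MvPolynomial (Fin n) V ⧸ Ideal.span {f}) ∧
      ∀ (v : V) (a b : MvPolynomial (Fin n) V), v ≠ 0 →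
        MvPolynomial.C v * a = b * f → a ∈ Ideal.span {f} :=
  quotient_by_nonspecial_polynomial_flat_general V n f hf
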